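/- Let $S = \oplus_{n \geq 0} I_n$ be a Noetherian graded ring with $I_0 = R$ Noetherian and $I_n$ a decreasing multiplicative filtration of ideals. If the ideal of $S$ generated by all elements of positive degree is generated by elements of degree at most $k$, then for all $m \geq k \cdot k!$, $I_m = I_{m-k!} I_{k!}$. -/

import Mathlib

/-!
Iterating `I m = ∑_{1 ≤ i ≤ k} I i * I (m - i)` bounds `I m` by the sum of the products
`∏ I iⱼ` over the decompositions `m = ∑ iⱼ` with parts in `[1, k]`. If `m ≥ k ⬝ k!`, then, as
there are at most `k` distinct parts, some part `i` occurs at least `k! / i` times; since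
`i ∣ k!`, these copies contribute a factor `I i ^ (k! / i) ≤ I k!` and the rest a factor
`≤ I (m - k!)`.
-/

/-- The graded ring `⊕ₙ Iₙ` associated to a multiplicative decreasing filtration of
ideals of `R` with `I 0 = R`, realized as the subalgebra of `R[X]` consisting of the
polynomials whose `n`-th coefficient lies in `I n`. -/
def filtRees (R : Type*) [CommRing R] (I : ℕ → Ideal R)
    (hmul : ∀ m n, I m * I n ≤ I (m + n)) (h0 : I 0 = ⊤) :
    Subalgebra R (Polynomial R) where
  carrier := {p | ∀ n, p.coeff n ∈ I n}
  add_mem' := fun {p q} hp hq n => by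
    simpa [Polynomial.coeff_add] using (I n).add_mem (hp n) (hq n)
  mul_mem' := fun {p q} hp hq n => by
    rw [Polynomial.coeff_mul]
    refine Submodule.sum_mem _ fun c hc => ?_
    rw [Finset.HasAntidiagonal.mem_antidiagonal] at hc
    have h := Ideal.mul_mem_mul (hp c.1) (hq c.2)
    exact hc ▸ hmul c.1 c.2 h
  algebraMap_mem' := fun r n => by
    rcases Nat.eq_zero_or_pos n with h | h
    · subst h
      simp [h0]
    · simp [Polynomial.coeff_C, Nat.pos_iff_ne_zero.mp h]

open Finset

theorem exists_div_le_count_of_mul_le_sum {k N : ℕ} {M : Multiset ℕ}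
    (hM : ∀ i ∈ M, i ∈ Icc 1 k) (hk : 0 < k) (hN : 0 < N) (hsum : k * N ≤ M.sum) :
    ∃ i ∈ M, N / i ≤ M.count i := by
  by_contra! hcount
  have hterm : ∀ i ∈ M.toFinset, M.count i • i ≤ N - 1 := by
    intro i hi
    rw [Multiset.mem_toFinset] at hi
    have hi1 : 1 ≤ i := (mem_Icc.mp (hM i hi)).1
    have hsucc := (Nat.le_div_iff_mul_le hi1).mp (hcount i hi)
    rw [Nat.succ_mul] at hsucc
    rw [smul_eq_mul]
    omega
  have hcard : M.toFinset.card ≤ k := by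
    simpa using card_le_card (t := Icc 1 k) fun i hi => hM i (Multiset.mem_toFinset.mp hi)
  have hbound : M.sum ≤ k * (N - 1) :=
    calc M.sum = ∑ i ∈ M.toFinset, M.count i • i := sum_multiset_count M
      _ ≤ M.toFinset.card * (N - 1) := by simpa using sum_le_sum hterm
      _ ≤ k * (N - 1) := Nat.mul_le_mul_right _ hcard
  have : k * (N - 1) < k * N := Nat.mul_lt_mul_of_pos_left (by omega) hk
  omega

section Filtration

variable {R : Type*} [CommRing R] {I : ℕ → Ideal R}

theorem prod_map_le_sum (hmul : ∀ m n, I m * I n ≤ I (m + n)) (h0 : I 0 = ⊤)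
    (M : Multiset ℕ) : (M.map I).prod ≤ I M.sum := by
  induction M using Multiset.induction with
  | empty => simp [h0, Ideal.one_eq_top]
  | cons a M ih =>
    simpa only [Multiset.map_cons, Multiset.prod_cons, Multiset.sum_cons] using
      (Ideal.mul_mono_right ih).trans (hmul a M.sum)

theorem prod_map_le_mul_of_le (hmul : ∀ m n, I m * I n ≤ I (m + n)) (h0 : I 0 = ⊤)
    {M' M : Multiset ℕ} (h : M' ≤ M) : (M.map I).prod ≤ I M'.sum * I (M.sum - M'.sum) := by
  obtain ⟨M'', rfl⟩ := Multiset.le_iff_exists_add.mp h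
  simpa only [Multiset.map_add, Multiset.prod_add, Multiset.sum_add, Nat.add_sub_cancel_left]
    using Ideal.mul_mono (prod_map_le_sum hmul h0 M') (prod_map_le_sum hmul h0 M'')

theorem le_iSup_prod_map_of_sum_eq {k : ℕ}
    (hgen : ∀ m, k < m → I m = ∑ i ∈ Icc 1 k, I i * I (m - i)) (n : ℕ) :
    I n ≤ ⨆ (M : Multiset ℕ) (_ : (∀ i ∈ M, i ∈ Icc 1 k) ∧ M.sum = n), (M.map I).prod := by
  induction n using Nat.strong_induction_on with
  | _ n ih =>
    rcases Nat.eq_zero_or_pos n with rfl | hn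
    · exact le_iSup₂_of_le 0 ⟨by simp, rfl⟩ (by simp [Ideal.one_eq_top])
    by_cases hnk : n ≤ k
    · exact le_iSup₂_of_le {n} ⟨by simpa using ⟨hn, hnk⟩, by simp⟩ (by simp)
    rw [hgen n (by omega), Ideal.sum_eq_sup, Finset.sup_le_iff]
    intro i hi
    have hi' := mem_Icc.mp hi
    refine (Ideal.mul_mono_right (ih (n - i) (by omega))).trans ?_
    simp_rw [Ideal.mul_iSup]
    refine iSup₂_le fun M ⟨hM, hMsum⟩ => le_iSup₂_of_le (i ::ₘ M) ⟨?_, ?_⟩ (by simp)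
    · simpa [hi'] using hM
    · rw [Multiset.sum_cons, hMsum]
      omega

theorem prod_map_le_mul_factorial (hmul : ∀ m n, I m * I n ≤ I (m + n)) (h0 : I 0 = ⊤)
    {k : ℕ} (hk : 1 ≤ k) {M : Multiset ℕ} (hM : ∀ i ∈ M, i ∈ Icc 1 k)
    (hsum : k * k.factorial ≤ M.sum) :
    (M.map I).prod ≤ I (M.sum - k.factorial) * I k.factorial := by
  obtain ⟨i, hiM, hcount⟩ :=
    exists_div_le_count_of_mul_le_sum hM hk k.factorial_pos hsum
  have hi := mem_Icc.mp (hM i hiM)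
  have hrep : (Multiset.replicate (k.factorial / i) i).sum = k.factorial := by
    rw [Multiset.sum_replicate, smul_eq_mul, Nat.div_mul_cancel (Nat.dvd_factorial hi.1 hi.2)]
  rw [mul_comm]
  simpa only [hrep] using
    prod_map_le_mul_of_le hmul h0 (Multiset.le_count_iff_replicate_le.mp hcount)

end Filtration

theorem filtration_degree_bound_general {R : Type*} [CommRing R]
    (I : ℕ → Ideal R)
    (hmul : ∀ m n, I m * I n ≤ I (m + n)) (h0 : I 0 = ⊤)
    (k : ℕ) (hk : 1 ≤ k)
    (hgen : ∀ m, k < m → I m = ∑ i ∈ Finset.Icc 1 k, I i * I (m - i)) :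
    ∀ m, k * Nat.factorial k ≤ m → I m = I (m - Nat.factorial k) * I (Nat.factorial k) := by
  intro m hm
  have hfac : Nat.factorial k ≤ m := (Nat.le_mul_of_pos_left _ hk).trans hm
  refine le_antisymm ?_ ?_
  · refine (le_iSup_prod_map_of_sum_eq hgen m).trans (iSup₂_le fun M ⟨hM, hMsum⟩ => ?_)
    subst hMsum
    exact prod_map_le_mul_factorial hmul h0 hk hM hm
  · calc I (m - Nat.factorial k) * I (Nat.factorial k)
        ≤ I (m - Nat.factorial k + Nat.factorial k) := hmul _ _
      _ = I m := by rw [Nat.sub_add_cancel hfac]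

/-- Let `S = ⊕ₙ Iₙ` be a Noetherian graded ring with `I₀ = R` Noetherian
and `Iₙ` a decreasing multiplicative filtration of ideals.  If the ideal of `S` generated by
the elements of positive degree is generated by elements of degree at most `k` (expressed
degreewise: `I m = ∑_{1 ≤ i ≤ k} I i * I (m - i)` for every `m > k`), then for all
`m ≥ k ⬝ k!` we have `I m = I (m - k!) * I k!`. -/
theorem filtration_degree_bound {R : Type*} [CommRing R] [IsNoetherianRing R]
    (I : ℕ → Ideal R) (hdec : ∀ n, I (n + 1) ≤ I n)
    (hmul : ∀ m n, I m * I n ≤ I (m + n)) (h0 : I 0 = ⊤)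
    (hS : IsNoetherianRing (filtRees R I hmul h0)) (k : ℕ) (hk : 1 ≤ k)
    (hgen : ∀ m, k < m → I m = ∑ i ∈ Finset.Icc 1 k, I i * I (m - i)) :
    ∀ m, k * Nat.factorial k ≤ m → I m = I (m - Nat.factorial k) * I (Nat.factorial k) :=
  filtration_degree_bound_general I hmul h0 k hk hgen
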